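/- Suppose the subgradient family {V_j}_{j≤k} on a Hilbert space satisfies the nilpotency of order two: all commutators [V_j, V_l] commute with every V_m (are central), and each V_j is anti-symmetric with respect to the inner product, with 𝔏 = −Σ_j V_j². Then ‖𝔏f‖² + Σ_{j,l≤k} ‖[V_l, V_j] f‖² = Σ_{j,l≤k} ‖V_j V_l f‖², and in particular ‖𝔏f‖² ≤ Σ_{j,l≤k} ‖V_j V_l f‖². -/

import Mathlib

open RealInnerProductSpace

theorem stmt9 {H : Type*} [NormedAddCommGroup H] [InnerProductSpace ℝ H]
    (k : ℕ) (V : Fin k → Module.End ℝ H)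
    (hanti : ∀ j (f g : H), ⟪V j f, g⟫ = -⟪f, V j g⟫)
    (hcentral : ∀ j l m, Commute ⁅V j, V l⁆ (V m))
    (L : Module.End ℝ H) (hL : L = -∑ j, V j * V j) (f : H) :
    ‖L f‖ ^ 2 + ∑ j, ∑ l, ‖(⁅V l, V j⁆) f‖ ^ 2 = (∑ j, ∑ l, ‖(V j * V l) f‖ ^ 2) ∧
    ‖L f‖ ^ 2 ≤ ∑ j, ∑ l, ‖(V j * V l) f‖ ^ 2 := by
  -- commutators are central (pointwise form)
  have hcomm : ∀ j l m (x : H), (⁅V j, V l⁆) (V m x) = V m ((⁅V j, V l⁆) x) := by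
    intro j l m x
    have h := LinearMap.congr_fun (hcentral j l m).eq x
    simpa [Module.End.mul_apply] using h
  -- commutators are anti-symmetric
  have hC : ∀ j l (x y : H), ⟪(⁅V j, V l⁆) x, y⟫ = -⟪x, (⁅V j, V l⁆) y⟫ := by
    intro j l x y
    simp only [Ring.lie_def, LinearMap.sub_apply, Module.End.mul_apply,
      inner_sub_left, inner_sub_right, hanti]
    ring
  -- key per-term identity
  have key : ∀ j l, ⟪(V j * V j) f, (V l * V l) f⟫ + ‖(⁅V l, V j⁆) f‖ ^ 2
      = ‖(V j * V l) f‖ ^ 2 := by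
    intro j l
    have hBA : ∀ x : H, V l (V j x) = V j (V l x) - (⁅V j, V l⁆) x := by
      intro x
      simp [Ring.lie_def, LinearMap.sub_apply, Module.End.mul_apply]
    set C : H := (⁅V j, V l⁆) f with hCdef
    -- the half-trick: 2 * ⟪C, V j (V l f)⟫ = ‖C‖²
    have ht : 2 * ⟪C, V j (V l f)⟫ = ‖C‖ ^ 2 := by
      have s1 : ⟪V j C, V l f⟫ = -⟪C, V j (V l f)⟫ := hanti j C (V l f)
      have s2 : V j C = (⁅V j, V l⁆) (V j f) := (hcomm j l j f).symm
      have s3 : ⟪(⁅V j, V l⁆) (V j f), V l f⟫ = -⟪V j f, (⁅V j, V l⁆) (V l f)⟫ :=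
        hC j l (V j f) (V l f)
      have s4 : (⁅V j, V l⁆) (V l f) = V l C := hcomm j l l f
      have s5 : ⟪V l (V j f), C⟫ = -⟪V j f, V l C⟫ := hanti l (V j f) C
      have s6 : ⟪V l (V j f), C⟫ = ⟪V j (V l f), C⟫ - ⟪C, C⟫ := by
        rw [hBA f, inner_sub_left, hCdef]
      have s7 : ⟪C, C⟫ = ‖C‖ ^ 2 := real_inner_self_eq_norm_sq C
      have s8 : ⟪V j (V l f), C⟫ = ⟪C, V j (V l f)⟫ := real_inner_comm _ _
      rw [s2] at s1
      rw [s4] at s3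
      linarith [s1, s3, s5, s6, s7, s8]
    -- main computation
    have m1 : ⟪(V j * V j) f, (V l * V l) f⟫ = -⟪V l (V j (V j f)), V l f⟫ := by
      have := hanti l (V j (V j f)) (V l f)
      simp only [Module.End.mul_apply]
      linarith [this]
    have m2 : V l (V j (V j f)) = V j (V l (V j f)) - (⁅V j, V l⁆) (V j f) := hBA (V j f)
    have m3 : ⟪V j (V l (V j f)), V l f⟫ = -⟪V l (V j f), V j (V l f)⟫ :=
      hanti j (V l (V j f)) (V l f)
    have m4 : ⟪V l (V j f), V j (V l f)⟫ = ⟪V j (V l f), V j (V l f)⟫ - ⟪C, V j (V l f)⟫ := by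
      rw [hBA f, inner_sub_left, hCdef]
    have m5 : ⟪(⁅V j, V l⁆) (V j f), V l f⟫ = -⟪C, V j (V l f)⟫ := by
      rw [hcomm j l j f]
      exact hanti j (⁅V j, V l⁆ f) (V l f)
    have m6 : ⟪V j (V l f), V j (V l f)⟫ = ‖(V j * V l) f‖ ^ 2 := by
      rw [← real_inner_self_eq_norm_sq]
      simp [Module.End.mul_apply]
    have m7 : ‖(⁅V l, V j⁆) f‖ ^ 2 = ‖C‖ ^ 2 := by
      rw [hCdef]
      simp only [Ring.lie_def, LinearMap.sub_apply, Module.End.mul_apply]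
      rw [norm_sub_rev]
    rw [m1, m2, inner_sub_left, m7]
    linarith [m3, m4, m5, m6, ht]
  -- expand ‖L f‖² as a double sum
  have h1 : ‖L f‖ ^ 2 = ∑ j, ∑ l, ⟪(V j * V j) f, (V l * V l) f⟫ := by
    have hLf : L f = -∑ j, (V j * V j) f := by
      rw [hL]; simp [LinearMap.sum_apply]
    rw [hLf, norm_neg, ← real_inner_self_eq_norm_sq, sum_inner]
    exact Finset.sum_congr rfl fun j _ => inner_sum _ _ _
  have main : ‖L f‖ ^ 2 + ∑ j, ∑ l, ‖(⁅V l, V j⁆) f‖ ^ 2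
      = ∑ j, ∑ l, ‖(V j * V l) f‖ ^ 2 := by
    rw [h1, ← Finset.sum_add_distrib]
    refine Finset.sum_congr rfl fun j _ => ?_
    rw [← Finset.sum_add_distrib]
    exact Finset.sum_congr rfl fun l _ => key j l
  refine ⟨main, ?_⟩
  have hnn : 0 ≤ ∑ j, ∑ l, ‖(⁅V l, V j⁆) f‖ ^ 2 := by positivity
  linarith
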